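/- Under the same hypotheses (g Lipschitz, $X^{(1)}_t-\phi^1(t)=\int_0^t[g(X_s)-g(\phi(s))]ds$), for every $\alpha\in(0,1)$ there is a constant $\tau_4>0$ such that the $\alpha$-Hölder seminorm satisfies $[X^{(1)}-\phi^1]_{C^\alpha([0,1],\mathbb{R}^d)}\le \tau_4\,\|X^{(2)}-\phi^2\|_{C^\alpha([0,1],\mathbb{R}^m)}$, where $\|\cdot\|_{C^\alpha}$ denotes the Hölder norm (supremum norm plus Hölder seminorm). -/

import Mathlib

/-!
Write `e = X⁽¹⁾ - φ¹` and `h(s) = g(Xₛ) - g(φ(s))`, so that `e` is the primitive of `h`.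
Lipschitz continuity of `g` gives `‖h‖ ≤ L (‖e‖ + M)`, and Grönwall's inequality turns this into
the sup bound `‖e‖ ≤ M exp L` on `[0,1]`. Hence `‖h‖ ≤ L (exp L + 1) M`, so `e` is Lipschitz with
that constant, and on the unit interval `|t - s| ≤ |t - s| ^ α` because `α ≤ 1`.
-/

open MeasureTheory intervalIntegral Set

theorem LipschitzWith.norm_sub_le_add {E F G : Type*} [SeminormedAddCommGroup E]
    [SeminormedAddCommGroup F] [SeminormedAddCommGroup G] {g : E × F → G} {L : NNReal}
    (hg : LipschitzWith L g) (x x' : E) (y y' : F) :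
    ‖g (x, y) - g (x', y')‖ ≤ L * (‖x - x'‖ + ‖y - y'‖) :=
  (hg.norm_sub_le _ _).trans <| by
    gcongr
    exact norm_prod_le_iff.2 ⟨le_add_of_nonneg_right (norm_nonneg _),
      le_add_of_nonneg_left (norm_nonneg _)⟩

section Primitive

variable {E : Type*} [NormedAddCommGroup E] [NormedSpace ℝ E] [CompleteSpace E]
  {f : ℝ → E} {a b : ℝ}

theorem ContinuousOn.hasDerivWithinAt_integral_Icc (hf : ContinuousOn f (Icc a b)) {x : ℝ}
    (hx : x ∈ Icc a b) :
    HasDerivWithinAt (fun y => ∫ t in a..y, f t) (f x) (Icc a b) x := by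
  have : Fact (x ∈ Icc a b) := ⟨hx⟩
  exact integral_hasDerivWithinAt_right
    ((hf.mono (uIcc_subset_Icc (left_mem_Icc.2 (hx.1.trans hx.2)) hx)).intervalIntegrable)
    (hf.stronglyMeasurableAtFilter_nhdsWithin measurableSet_Icc x) (hf x hx)

theorem norm_integral_le_gronwallBound {K ε : ℝ} (hf : ContinuousOn f (Icc a b))
    (bound : ∀ x ∈ Ico a b, ‖f x‖ ≤ K * ‖∫ t in a..x, f t‖ + ε) :
    ∀ x ∈ Icc a b, ‖∫ t in a..x, f t‖ ≤ gronwallBound 0 K ε (x - a) :=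
  norm_le_gronwallBound_of_norm_deriv_right_le
    (fun x hx => (hf.hasDerivWithinAt_integral_Icc hx).continuousWithinAt)
    (fun x hx => (hf.hasDerivWithinAt_integral_Icc (Ico_subset_Icc_self hx)).mono_of_mem_nhdsWithin
      (Icc_mem_nhdsGE_of_mem hx))
    (by simp) bound

end Primitive

theorem gronwallBound_zero_mul_le {K M : ℝ} (hM : 0 ≤ M) (x : ℝ) :
    gronwallBound 0 K (K * M) x ≤ M * Real.exp (K * x) := by
  rcases eq_or_ne K 0 with rfl | hK
  · simp only [gronwallBound_K0, zero_mul, zero_add]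
    positivity
  · rw [gronwallBound_of_K_ne_0 hK, mul_div_cancel_left₀ M hK]
    nlinarith

theorem intervalIntegral.norm_integral_le_mul_rpow {E : Type*} [NormedAddCommGroup E]
    [NormedSpace ℝ E] {f : ℝ → E} {s t C α : ℝ} (hα : α ≤ 1) (hC : 0 ≤ C) (hst : |t - s| ≤ 1)
    (hf : ∀ u ∈ uIoc s t, ‖f u‖ ≤ C) :
    ‖∫ u in s..t, f u‖ ≤ C * |t - s| ^ α :=
  (norm_integral_le_of_norm_le_const hf).trans <| by
    gcongr
    exact Real.self_le_rpow_of_le_one (abs_nonneg _) hst hα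

/-- **(H4) for Hölder norms.** If `g` is Lipschitz and
`X⁽¹⁾ₜ - φ¹(t) = ∫₀ᵗ [g(Xₛ) - g(φ(s))] ds`, then for every `α ∈ (0,1)` there is a constant
`τ₄ > 0` such that the `α`-Hölder seminorm of `X⁽¹⁾ - φ¹` is bounded by `τ₄` times the
`α`-Hölder norm of `X⁽²⁾ - φ²`: whenever `M` bounds both the supremum norm and the
`α`-Hölder seminorm of `X⁽²⁾ - φ²` on `[0,1]`, the increments of `X⁽¹⁾ - φ¹` satisfy
`|(X⁽¹⁾ₜ - φ¹(t)) - (X⁽¹⁾ₛ - φ¹(s))| ≤ τ₄ M |t - s|^α`. -/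
theorem holder_norm_controllability (d m : ℕ) (α : ℝ) (hα : α ∈ Set.Ioo (0:ℝ) 1)
    (L : NNReal) :
    ∃ τ₄ : ℝ, 0 < τ₄ ∧
      ∀ (g : EuclideanSpace ℝ (Fin d) × EuclideanSpace ℝ (Fin m) → EuclideanSpace ℝ (Fin d))
        (X₁ φ₁ : ℝ → EuclideanSpace ℝ (Fin d)) (X₂ φ₂ : ℝ → EuclideanSpace ℝ (Fin m)),
        LipschitzWith L g →
        ContinuousOn X₁ (Icc 0 1) → ContinuousOn X₂ (Icc 0 1) →
        ContinuousOn φ₁ (Icc 0 1) → ContinuousOn φ₂ (Icc 0 1) →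
        (∀ t ∈ Icc (0:ℝ) 1,
          X₁ t - φ₁ t = ∫ s in (0:ℝ)..t, (g (X₁ s, X₂ s) - g (φ₁ s, φ₂ s))) →
        ∀ M : ℝ, 0 ≤ M →
          (∀ t ∈ Icc (0:ℝ) 1, ‖X₂ t - φ₂ t‖ ≤ M) →
          (∀ s ∈ Icc (0:ℝ) 1, ∀ t ∈ Icc (0:ℝ) 1,
            ‖(X₂ t - φ₂ t) - (X₂ s - φ₂ s)‖ ≤ M * |t - s| ^ α) →
          ∀ s ∈ Icc (0:ℝ) 1, ∀ t ∈ Icc (0:ℝ) 1,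
            ‖(X₁ t - φ₁ t) - (X₁ s - φ₁ s)‖ ≤ τ₄ * M * |t - s| ^ α := by
  refine ⟨L * (Real.exp L + 1) + 1, by positivity, ?_⟩
  intro g X₁ φ₁ X₂ φ₂ hg hX₁ hX₂ hφ₁ hφ₂ heq M hM hsup _ s hs t ht
  set h := fun u => g (X₁ u, X₂ u) - g (φ₁ u, φ₂ u)
  have hh_cont : ContinuousOn h (Icc 0 1) :=
    (hg.continuous.comp_continuousOn (hX₁.prodMk hX₂)).sub
      (hg.continuous.comp_continuousOn (hφ₁.prodMk hφ₂))
  have hh_le (u) (hu : u ∈ Icc (0:ℝ) 1) : ‖h u‖ ≤ L * ‖X₁ u - φ₁ u‖ + L * M := by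
    have := hg.norm_sub_le_add (X₁ u) (φ₁ u) (X₂ u) (φ₂ u)
    nlinarith [hsup u hu, L.coe_nonneg]
  have he_le (u) (hu : u ∈ Icc (0:ℝ) 1) : ‖X₁ u - φ₁ u‖ ≤ M * Real.exp L := by
    rw [heq u hu]
    calc _ ≤ gronwallBound 0 L (L * M) (u - 0) :=
          norm_integral_le_gronwallBound hh_cont
            (fun v hv => heq v (Ico_subset_Icc_self hv) ▸ hh_le v (Ico_subset_Icc_self hv)) u hu
      _ ≤ M * Real.exp (L * (u - 0)) := gronwallBound_zero_mul_le hM _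
      _ ≤ M * Real.exp L := by gcongr; nlinarith [hu.1, hu.2, L.coe_nonneg]
  have hh_bound (u) (hu : u ∈ Icc (0:ℝ) 1) : ‖h u‖ ≤ L * (Real.exp L + 1) * M := by
    nlinarith [hh_le u hu, he_le u hu, L.coe_nonneg]
  have hincr : (X₁ t - φ₁ t) - (X₁ s - φ₁ s) = ∫ u in s..t, h u := by
    rw [heq t ht, heq s hs]
    exact integral_interval_sub_left
      (hh_cont.mono (uIcc_subset_Icc (left_mem_Icc.2 zero_le_one) ht)).intervalIntegrable
      (hh_cont.mono (uIcc_subset_Icc (left_mem_Icc.2 zero_le_one) hs)).intervalIntegrable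
  rw [hincr]
  calc _ ≤ L * (Real.exp L + 1) * M * |t - s| ^ α :=
        norm_integral_le_mul_rpow hα.2.le (by positivity)
          (abs_sub_le_of_nonneg_of_le ht.1 ht.2 hs.1 hs.2)
          (fun u hu => hh_bound u (uIcc_subset_Icc hs ht (uIoc_subset_uIcc hu)))
    _ ≤ _ := by gcongr; linarith
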